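/- arXiv:1812.11199 — 2 statements merged into one kernel-verified Lean document; each statement's English description precedes it below -/
import Mathlib

section
/- Let n ≥ 2 and let I be an ideal of ℂ[X,Y] of codimension n that is supported at the origin and satisfies I + σ(I) = ⟨X,Y⟩. Then I is contained in the maximal ideal m = ⟨X,Y⟩, and the image of I in the two-dimensional ℂ-vector space m/m² (equivalently, the ℂ-vector space (I + m²)/m²) has dimension exactly 1. -/
open MvPolynomial Pointwise

set_option synthInstance.maxHeartbeats 1000000
set_option maxHeartbeats 1000000

/-- The conjugation `σ` of `ℂ[X,Y]`: complex conjugation on the coefficients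
composed with the exchange of the two variables. -/
noncomputable def sigmaConj : MvPolynomial (Fin 2) ℂ →+* MvPolynomial (Fin 2) ℂ :=
  (MvPolynomial.rename (Equiv.swap (0 : Fin 2) 1)).toRingHom.comp
    (MvPolynomial.map (starRingEnd ℂ))

/-- The maximal ideal `m = ⟨X, Y⟩` of `ℂ[X,Y]` supported at the origin. -/
noncomputable def mIdeal : Ideal (MvPolynomial (Fin 2) ℂ) := Ideal.span {X 0, X 1}

/-- For an ideal `J` of `ℂ[X,Y]`, its image `(J + m²)/m²` in `ℂ[X,Y]/m²`,
viewed as a `ℂ`-vector space. -/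
noncomputable def imageModM2 (J : Ideal (MvPolynomial (Fin 2) ℂ)) :
    Submodule ℂ (MvPolynomial (Fin 2) ℂ ⧸ (mIdeal ^ 2)) :=
  Submodule.restrictScalars ℂ (Ideal.map (Ideal.Quotient.mk (mIdeal ^ 2)) J)

abbrev RR := MvPolynomial (Fin 2) ℂ

-- membership lemma C
lemma monomial_mem_of_le {a d : Fin 2 →₀ ℕ} {c : ℂ} {J : Ideal RR} (hd : d ≤ a)
    (hm : (monomial d 1 : RR) ∈ J) : (monomial a c : RR) ∈ J := by
  have h : (monomial a c : RR) = monomial (a - d) c * monomial d 1 := by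
    rw [monomial_mul, mul_one, tsub_add_cancel_of_le hd]
  rw [h]
  exact J.mul_mem_left _ hm

lemma X_mem_m (i : Fin 2) : (X i : RR) ∈ mIdeal := by
  fin_cases i
  · exact Ideal.subset_span (by simp)
  · exact Ideal.subset_span (by simp)

-- A2
lemma mem_m_of_coeff_zero {p : RR} (h : coeff 0 p = 0) : p ∈ mIdeal := by
  rw [p.as_sum]
  refine Submodule.sum_mem _ (fun a ha => ?_)
  have ha0 : a ≠ 0 := by
    rintro rfl
    exact (MvPolynomial.mem_support_iff.mp ha) h
  obtain ⟨i, hi⟩ : ∃ i, a i ≠ 0 := by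
    by_contra hc
    push_neg at hc
    exact ha0 (Finsupp.ext hc)
  refine monomial_mem_of_le (d := Finsupp.single i 1) ?_ ?_
  · rw [Finsupp.single_le_iff]; omega
  · rw [← MvPolynomial.X]; exact X_mem_m i

lemma XX_mem_m2 (i j : Fin 2) : (X i * X j : RR) ∈ mIdeal ^ 2 := by
  rw [pow_two]
  exact Ideal.mul_mem_mul (X_mem_m i) (X_mem_m j)

lemma monomial_mem_m2 {a : Fin 2 →₀ ℕ} (c : ℂ) (h : 2 ≤ a 0 + a 1) :
    (monomial a c : RR) ∈ mIdeal ^ 2 := by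
  have key : ∀ i j : Fin 2, Finsupp.single i 1 + Finsupp.single j 1 ≤ a →
      (monomial a c : RR) ∈ mIdeal ^ 2 := by
    intro i j hle
    refine monomial_mem_of_le hle ?_
    have : (monomial (Finsupp.single i 1 + Finsupp.single j 1) (1:ℂ) : RR) = X i * X j := by
      simp [X, monomial_mul]
    rw [this]
    exact XX_mem_m2 i j
  rcases (by omega : 2 ≤ a 0 ∨ 2 ≤ a 1 ∨ (1 ≤ a 0 ∧ 1 ≤ a 1)) with h1 | h1 | h1
  · refine key 0 0 ?_
    intro k
    fin_cases k <;> simp [Finsupp.single_apply] <;> omega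
  · refine key 1 1 ?_
    intro k
    fin_cases k <;> simp [Finsupp.single_apply] <;> omega
  · refine key 0 1 ?_
    intro k
    fin_cases k <;> simp [Finsupp.single_apply] <;> omega

lemma coeff_eq_zero_of_mem_m2 {p : RR} (hp : p ∈ mIdeal ^ 2) {b : Fin 2 →₀ ℕ}
    (hb : b 0 + b 1 ≤ 1) : coeff b p = 0 := by
  revert b
  have h2 : mIdeal ^ 2 = Ideal.span (({X 0, X 1} : Set RR) * ({X 0, X 1} : Set RR)) := by
    rw [pow_two, mIdeal, Ideal.span_mul_span']
  rw [h2] at hp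
  refine Submodule.span_induction ?_ ?_ ?_ ?_ hp
  · rintro g hg b hb
    obtain ⟨s, hs, t, ht, rfl⟩ := Set.mem_mul.mp hg
    have hst : ∃ i j : Fin 2, s = X i ∧ t = X j := by
      rcases hs with rfl | rfl <;> rcases ht with rfl | rfl
      · exact ⟨0, 0, rfl, rfl⟩
      · exact ⟨0, 1, rfl, rfl⟩
      · exact ⟨1, 0, rfl, rfl⟩
      · exact ⟨1, 1, rfl, rfl⟩
    obtain ⟨i, j, rfl, rfl⟩ := hst
    have : (X i * X j : RR) = monomial (Finsupp.single i 1 + Finsupp.single j 1) 1 := by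
      simp [X, monomial_mul]
    rw [this, coeff_monomial]
    have hne : Finsupp.single i 1 + Finsupp.single j 1 ≠ b := by
      intro hEq
      have h0 := congrArg (fun f : Fin 2 →₀ ℕ => f 0 + f 1) hEq
      simp only [Finsupp.add_apply, Finsupp.single_apply] at h0
      fin_cases i <;> fin_cases j <;> simp_all <;> omega
    simp [hne]
  · intro b hb; simp
  · intro x y _ _ hx hy b hb
    simp [coeff_add, hx hb, hy hb]
  · intro r x _ hx b hb
    rw [smul_eq_mul, coeff_mul]
    refine Finset.sum_eq_zero (fun uv huv => ?_)
    have h1 : uv.1 + uv.2 = b := Finset.HasAntidiagonal.mem_antidiagonal.mp huv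
    have h2 : uv.2 0 + uv.2 1 ≤ 1 := by
      have := congrArg (fun f : Fin 2 →₀ ℕ => f 0 + f 1) h1
      simp only [Finsupp.add_apply] at this
      omega
    rw [hx h2, mul_zero]

lemma mem_m2_of_coeffs {p : RR} (h : ∀ b : Fin 2 →₀ ℕ, b 0 + b 1 ≤ 1 → coeff b p = 0) :
    p ∈ mIdeal ^ 2 := by
  rw [p.as_sum]
  refine Submodule.sum_mem _ (fun a ha => ?_)
  refine monomial_mem_m2 _ ?_
  by_contra hc
  exact (MvPolynomial.mem_support_iff.mp ha) (h a (by omega))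

lemma low_cases {b : Fin 2 →₀ ℕ} (hb : b 0 + b 1 ≤ 1) :
    b = 0 ∨ b = Finsupp.single 0 1 ∨ b = Finsupp.single 1 1 := by
  have hext : ∀ (c : Fin 2 →₀ ℕ), b 0 = c 0 → b 1 = c 1 → b = c := by
    intro c h0 h1; ext k; fin_cases k <;> assumption
  rcases (by omega : (b 0 = 0 ∧ b 1 = 0) ∨ (b 0 = 1 ∧ b 1 = 0) ∨ (b 0 = 0 ∧ b 1 = 1)) with
    ⟨h0, h1⟩ | ⟨h0, h1⟩ | ⟨h0, h1⟩
  · exact Or.inl (hext 0 (by simpa using h0) (by simpa using h1))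
  · refine Or.inr (Or.inl (hext _ ?_ ?_)) <;>
      simp [h0, h1, Finsupp.single_apply]
  · refine Or.inr (Or.inr (hext _ ?_ ?_)) <;>
      simp [h0, h1, Finsupp.single_apply]

lemma trunc_mem_m2 (p : RR) :
    p - (C (coeff 0 p) + C (coeff (Finsupp.single 0 1) p) * X 0
      + C (coeff (Finsupp.single 1 1) p) * X 1) ∈ mIdeal ^ 2 := by
  refine mem_m2_of_coeffs (fun b hb => ?_)
  rcases low_cases hb with rfl | rfl | rfl <;>
    simp [coeff_sub, coeff_add, coeff_C, coeff_C_mul, coeff_X', eq_comm,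
      Finsupp.single_eq_zero, Finsupp.single_eq_single_iff]

lemma coeff_zero_of_mem_m {p : RR} (hp : p ∈ mIdeal) : coeff 0 p = 0 := by
  rw [mIdeal, Ideal.mem_span_pair] at hp
  obtain ⟨a, b, rfl⟩ := hp
  rw [← constantCoeff_eq]
  simp

lemma m_ne_top : mIdeal ≠ ⊤ := by
  intro h
  have h1 : (1 : RR) ∈ mIdeal := h ▸ Submodule.mem_top
  simpa using coeff_zero_of_mem_m h1

lemma smul_mk (J : Ideal RR) (c : ℂ) (q : RR) :
    c • Ideal.Quotient.mk J q = Ideal.Quotient.mk J (C c * q) := by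
  have h := Algebra.smul_def c (Ideal.Quotient.mk J q)
  rw [h, IsScalarTower.algebraMap_apply ℂ RR (RR ⧸ J),
    Ideal.Quotient.algebraMap_eq, ← map_mul, MvPolynomial.algebraMap_eq]

lemma finrank_R_mod_m : Module.finrank ℂ (RR ⧸ mIdeal) = 1 := by
  haveI : Nontrivial (RR ⧸ mIdeal) := Ideal.Quotient.nontrivial_iff.mpr m_ne_top
  refine finrank_eq_one (1 : RR ⧸ mIdeal) one_ne_zero (fun w => ?_)
  obtain ⟨p, rfl⟩ := Ideal.Quotient.mk_surjective w
  refine ⟨coeff 0 p, ?_⟩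
  have h1 : (1 : RR ⧸ mIdeal) = Ideal.Quotient.mk mIdeal 1 := rfl
  rw [h1, smul_mk, mul_one, Ideal.Quotient.eq]
  exact mem_m_of_coeff_zero (by simp)

lemma m_pow_le (I : Ideal RR) (hrad : I.radical = mIdeal) : ∃ k, mIdeal ^ k ≤ I := by
  refine Ideal.exists_pow_le_of_le_radical_of_fg (le_of_eq hrad.symm) ?_
  refine ⟨{X 0, X 1}, ?_⟩
  rw [mIdeal]
  congr 1
  simp

lemma eq_m_of_sup (I : Ideal RR) (hIm : I ≤ mIdeal) (hrad : I.radical = mIdeal)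
    (h : mIdeal ≤ I ⊔ mIdeal ^ 2) : I = mIdeal := by
  obtain ⟨k, hk⟩ := m_pow_le I hrad
  have key : ∀ j, mIdeal ≤ I ⊔ mIdeal ^ (j + 2) := by
    intro j
    induction j with
    | zero => simpa using h
    | succ j ih =>
      have h2 : mIdeal ^ 2 ≤ I ⊔ mIdeal ^ (j + 3) := by
        calc mIdeal ^ 2 = mIdeal * mIdeal := sq mIdeal
          _ ≤ mIdeal * (I ⊔ mIdeal ^ (j + 2)) := Ideal.mul_mono le_rfl ih
          _ = mIdeal * I ⊔ mIdeal * mIdeal ^ (j + 2) := Ideal.mul_sup _ _ _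
          _ ≤ I ⊔ mIdeal ^ (j + 3) := by
              refine sup_le_sup Ideal.mul_le_right (le_of_eq ?_)
              rw [← pow_succ']
      calc mIdeal ≤ I ⊔ mIdeal ^ 2 := h
        _ ≤ I ⊔ (I ⊔ mIdeal ^ (j + 3)) := sup_le_sup le_rfl h2
        _ = I ⊔ mIdeal ^ (j + 3) := by rw [← sup_assoc, sup_idem]
  refine le_antisymm hIm ?_
  calc mIdeal ≤ I ⊔ mIdeal ^ (k + 2) := key k
    _ ≤ I ⊔ I := sup_le_sup le_rfl ((Ideal.pow_le_pow_right (by omega)).trans hk)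
    _ = I := sup_idem I

-- σ facts
lemma sigma_X0 : sigmaConj (X 0) = X 1 := by
  simp [sigmaConj, MvPolynomial.map_X, rename_X]

lemma sigma_X1 : sigmaConj (X 1) = X 0 := by
  simp [sigmaConj, MvPolynomial.map_X, rename_X]

lemma sigma_comp : sigmaConj.comp sigmaConj = RingHom.id RR := by
  apply MvPolynomial.ringHom_ext
  · intro a
    simp [sigmaConj, MvPolynomial.map_C, rename_C]
  · intro i
    have h0 : sigmaConj.comp sigmaConj (X (0 : Fin 2)) = RingHom.id RR (X (0:Fin 2)) := by
      simp only [RingHom.comp_apply, RingHom.id_apply]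
      rw [sigma_X0, sigma_X1]
    have h1 : sigmaConj.comp sigmaConj (X (1 : Fin 2)) = RingHom.id RR (X (1:Fin 2)) := by
      simp only [RingHom.comp_apply, RingHom.id_apply]
      rw [sigma_X1, sigma_X0]
    fin_cases i
    · exact h0
    · exact h1

lemma sigma_sigma_ideal (I : Ideal RR) :
    Ideal.map sigmaConj (Ideal.map sigmaConj I) = I := by
  rw [Ideal.map_map, sigma_comp, Ideal.map_id]

lemma sigma_m : Ideal.map sigmaConj mIdeal = mIdeal := by
  rw [mIdeal, Ideal.map_span, Set.image_pair, sigma_X0, sigma_X1, Set.pair_comm]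

lemma sigma_m2 : Ideal.map sigmaConj (mIdeal ^ 2) = mIdeal ^ 2 := by
  rw [Ideal.map_pow, sigma_m]

noncomputable abbrev mk2 : RR →+* RR ⧸ (mIdeal ^ 2) := Ideal.Quotient.mk (mIdeal ^ 2)

lemma mk2_trunc (p : RR) :
    mk2 p = coeff 0 p • (1 : RR ⧸ mIdeal ^ 2)
      + coeff (Finsupp.single 0 1) p • mk2 (X 0)
      + coeff (Finsupp.single 1 1) p • mk2 (X 1) := by
  have h1 : (1 : RR ⧸ mIdeal ^ 2) = mk2 1 := rfl
  rw [h1, smul_mk, smul_mk, smul_mk, ← map_add, ← map_add, Ideal.Quotient.eq, mul_one]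
  exact trunc_mem_m2 p

lemma top_spanned : (⊤ : Submodule ℂ (RR ⧸ mIdeal ^ 2)) =
    Submodule.span ℂ {(1 : RR ⧸ mIdeal ^ 2), mk2 (X 0), mk2 (X 1)} := by
  refine le_antisymm ?_ le_top
  intro z _
  obtain ⟨p, rfl⟩ := Ideal.Quotient.mk_surjective z
  rw [mk2_trunc p]
  refine Submodule.add_mem _ (Submodule.add_mem _ ?_ ?_) ?_ <;>
    exact Submodule.smul_mem _ _ (Submodule.subset_span (by simp))

instance : FiniteDimensional ℂ (RR ⧸ mIdeal ^ 2) := by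
  refine ⟨Submodule.fg_def.mpr ⟨{1, mk2 (X 0), mk2 (X 1)}, ?_, top_spanned.symm⟩⟩
  exact ((Set.finite_singleton _).insert _).insert _

lemma mk2_mul_X (p : RR) (i : Fin 2) :
    mk2 p * mk2 (X i) = coeff 0 p • mk2 (X i) := by
  rw [smul_mk, ← map_mul, Ideal.Quotient.eq]
  have h : p * X i - C (coeff 0 p) * X i = (p - C (coeff 0 p)) * X i := by ring
  rw [h, pow_two]
  refine Ideal.mul_mem_mul (mem_m_of_coeff_zero ?_) (X_mem_m i)
  simp

lemma image_m_eq : imageModM2 mIdeal = Submodule.span ℂ {mk2 (X 0), mk2 (X 1)} := by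
  apply le_antisymm
  · intro z hz
    have hmap : Ideal.map mk2 mIdeal = Ideal.span {mk2 (X 0), mk2 (X 1)} := by
      have h := Ideal.map_span mk2 ({X 0, X 1} : Set RR)
      rw [Set.image_pair] at h
      exact h
    have hz' : z ∈ Ideal.span {mk2 (X 0), mk2 (X 1)} := by
      rw [← hmap]
      exact hz
    rw [Ideal.mem_span_pair] at hz'
    obtain ⟨r, s, hrs⟩ := hz'
    obtain ⟨p, rfl⟩ := Ideal.Quotient.mk_surjective r
    obtain ⟨q, rfl⟩ := Ideal.Quotient.mk_surjective s
    rw [← hrs, mk2_mul_X, mk2_mul_X]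
    exact Submodule.add_mem _
      (Submodule.smul_mem _ _ (Submodule.subset_span (by simp)))
      (Submodule.smul_mem _ _ (Submodule.subset_span (by simp)))
  · rw [Submodule.span_le]
    rintro z hz
    rcases hz with rfl | rfl
    · exact Ideal.mem_map_of_mem mk2 (X_mem_m 0)
    · exact Ideal.mem_map_of_mem mk2 (X_mem_m 1)

lemma xy_indep : LinearIndependent ℂ ![mk2 (X 0), mk2 (X 1)] := by
  rw [LinearIndependent.pair_iff]
  intro s t hst
  rw [smul_mk, smul_mk, ← map_add] at hst
  rw [← map_zero mk2] at hst
  rw [Ideal.Quotient.eq] at hst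
  have h : ∀ b : Fin 2 →₀ ℕ, b 0 + b 1 ≤ 1 → coeff b (C s * X 0 + C t * X 1) = 0 :=
    fun b hb => coeff_eq_zero_of_mem_m2 (by simpa using hst) hb
  constructor
  · have hs := h (Finsupp.single 0 1) (by simp [Finsupp.single_apply])
    simpa [coeff_add, coeff_C_mul, coeff_X', Finsupp.single_eq_single_iff] using hs
  · have ht := h (Finsupp.single 1 1) (by simp [Finsupp.single_apply])
    simpa [coeff_add, coeff_C_mul, coeff_X', Finsupp.single_eq_single_iff] using ht

lemma finrank_image_m : Module.finrank ℂ (imageModM2 mIdeal) = 2 := by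
  rw [image_m_eq]
  have hr : ({mk2 (X 0), mk2 (X 1)} : Set (RR ⧸ mIdeal ^ 2))
      = Set.range ![mk2 (X 0), mk2 (X 1)] := by
    ext z
    simp [Fin.exists_fin_two, eq_comm, or_comm]
  rw [hr, finrank_span_eq_card xy_indep]
  simp

lemma restrict_sup (P Q : Ideal (RR ⧸ mIdeal ^ 2)) :
    Submodule.restrictScalars ℂ (P ⊔ Q)
      = Submodule.restrictScalars ℂ P ⊔ Submodule.restrictScalars ℂ Q := by
  ext z
  simp [Submodule.mem_sup]

theorem stmt5 (n : ℕ) (hn : 2 ≤ n) (I : Ideal (MvPolynomial (Fin 2) ℂ))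
    (hcodim : Module.finrank ℂ (MvPolynomial (Fin 2) ℂ ⧸ I) = n)
    (hsupp : I.radical = mIdeal)
    (hmax : I ⊔ Ideal.map sigmaConj I = mIdeal) :
    I ≤ mIdeal ∧
    -- `m/m² = (m + m²)/m²` is a two-dimensional `ℂ`-vector space …
    Module.finrank ℂ (imageModM2 mIdeal) = 2 ∧
    -- … and the image `(I + m²)/m²` of `I` in it has dimension exactly `1`.
    Module.finrank ℂ (imageModM2 I) = 1 := by
  have hIm : I ≤ mIdeal := hsupp ▸ Ideal.le_radical
  have hcontr : ¬ (mIdeal ≤ I ⊔ mIdeal ^ 2) := by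
    intro h
    have hIeq : I = mIdeal := eq_m_of_sup I hIm hsupp h
    rw [hIeq, finrank_R_mod_m] at hcodim
    omega
  have hmm : mIdeal ⊔ mIdeal ^ 2 = mIdeal :=
    sup_eq_left.mpr (Ideal.pow_le_self two_ne_zero)
  have hker : Ideal.comap mk2 (⊥ : Ideal (RR ⧸ mIdeal ^ 2)) = mIdeal ^ 2 := by
    rw [← RingHom.ker_eq_comap_bot, Ideal.mk_ker]
  have hVne : Ideal.map mk2 I ≠ Ideal.map mk2 mIdeal := by
    intro h
    apply hcontr
    have hc := congrArg (Ideal.comap mk2) h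
    rw [Ideal.comap_map_of_surjective mk2 Ideal.Quotient.mk_surjective,
        Ideal.comap_map_of_surjective mk2 Ideal.Quotient.mk_surjective,
        hker, hmm] at hc
    exact le_of_eq hc.symm
  have hWne : Ideal.map mk2 (Ideal.map sigmaConj I) ≠ Ideal.map mk2 mIdeal := by
    intro h
    apply hcontr
    have hc := congrArg (Ideal.comap mk2) h
    rw [Ideal.comap_map_of_surjective mk2 Ideal.Quotient.mk_surjective,
        Ideal.comap_map_of_surjective mk2 Ideal.Quotient.mk_surjective,
        hker, hmm] at hc
    have hc2 := congrArg (Ideal.map sigmaConj) hc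
    rw [Ideal.map_sup, sigma_sigma_ideal, sigma_m2, sigma_m] at hc2
    exact le_of_eq hc2.symm
  have hsup : imageModM2 I ⊔ imageModM2 (Ideal.map sigmaConj I) = imageModM2 mIdeal := by
    have h1 : imageModM2 I ⊔ imageModM2 (Ideal.map sigmaConj I)
        = Submodule.restrictScalars ℂ
          (Ideal.map mk2 I ⊔ Ideal.map mk2 (Ideal.map sigmaConj I)) :=
      (restrict_sup _ _).symm
    rw [h1, ← Ideal.map_sup, hmax]
    rfl
  have hVle : imageModM2 I ≤ imageModM2 mIdeal := fun z hz => Ideal.map_mono hIm hz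
  have hVneM : imageModM2 I ≠ imageModM2 mIdeal := by
    intro h
    exact hVne (Submodule.restrictScalars_injective ℂ _ _ h)
  have hWneM : imageModM2 (Ideal.map sigmaConj I) ≠ imageModM2 mIdeal := by
    intro h
    exact hWne (Submodule.restrictScalars_injective ℂ _ _ h)
  have hVbot : imageModM2 I ≠ ⊥ := by
    intro h
    apply hWneM
    rw [← hsup, h, bot_sup_eq]
  refine ⟨hIm, finrank_image_m, ?_⟩
  have hlt : imageModM2 I < imageModM2 mIdeal := lt_of_le_of_ne hVle hVneM
  have h2 : Module.finrank ℂ (imageModM2 I) < 2 := by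
    have h := Submodule.finrank_lt_finrank_of_lt hlt
    rwa [finrank_image_m] at h
  have h1 : Module.finrank ℂ (imageModM2 I) ≠ 0 := by
    intro h0
    exact hVbot (Submodule.finrank_eq_zero.mp h0)
  omega
end

section
/- An ideal I of ℂ[X,Y] has codimension 2 and is supported at the origin if and only if there exists (a,b) ∈ ℂ² with (a,b) ≠ (0,0) such that I is the ideal generated by aX + bY, X², XY and Y². (In other words, the zero-fiber Hilb²₀(ℂ²) of the punctual Hilbert scheme is exactly the set of linear directions at the origin, i.e. a projective line.) -/
set_option synthInstance.maxHeartbeats 1000000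
set_option maxHeartbeats 1000000

open MvPolynomial

local notation "RR" => MvPolynomial (Fin 2) ℂ

private noncomputable def M2 : Ideal RR := Ideal.span {X 0 ^ 2, X 0 * X 1, X 1 ^ 2}

private lemma pow_mem_M2 (i j : ℕ) (h : 2 ≤ i + j) : (X 0 : RR) ^ i * X 1 ^ j ∈ M2 := by
  have h0 : (X 0 : RR) ^ 2 ∈ M2 := Ideal.subset_span (by simp [M2])
  have h1 : (X 0 : RR) * X 1 ∈ M2 := Ideal.subset_span (by simp [M2])
  have h2 : (X 1 : RR) ^ 2 ∈ M2 := Ideal.subset_span (by simp [M2])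
  rcases Nat.lt_or_ge i 2 with hi | hi
  · interval_cases i
    · have e : (X 0 : RR) ^ 0 * X 1 ^ j = X 1 ^ (j-2) * X 1 ^ 2 := by
        rw [pow_zero, one_mul, ← pow_add]; congr 1; omega
      rw [e]; exact Ideal.mul_mem_left _ _ h2
    · have e : (X 0 : RR) ^ 1 * X 1 ^ j = X 1 ^ (j-1) * (X 0 * X 1) := by
        conv_lhs => rw [show j = (j-1)+1 by omega]
        rw [pow_one, pow_succ]; ring
      rw [e]; exact Ideal.mul_mem_left _ _ h1
  · have e : (X 0 : RR) ^ i * X 1 ^ j = (X 0 ^ (i-2) * X 1 ^ j) * X 0 ^ 2 := by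
      conv_lhs => rw [show i = (i-2)+2 by omega]
      rw [pow_add]; ring
    rw [e]; exact Ideal.mul_mem_left _ _ h0

private lemma monomial_eq_two (d : Fin 2 →₀ ℕ) (c : ℂ) :
    (monomial d c : RR) = C c * X 0 ^ (d 0) * X 1 ^ (d 1) := by
  rw [monomial_eq, Finsupp.prod_fintype _ _ (fun i => pow_zero _), Fin.prod_univ_two, mul_assoc]

private lemma decompose (p : RR) :
    p - C (coeff 0 p) - C (coeff (Finsupp.single 0 1) p) * X 0
      - C (coeff (Finsupp.single 1 1) p) * X 1 ∈ M2 := by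
  have e01 : (0 : Fin 2 →₀ ℕ) ≠ Finsupp.single 0 1 := fun h => by
    simpa using DFunLike.congr_fun h 0
  have e02 : (0 : Fin 2 →₀ ℕ) ≠ Finsupp.single 1 1 := fun h => by
    simpa using DFunLike.congr_fun h 1
  have e12 : (Finsupp.single (0 : Fin 2) 1 : Fin 2 →₀ ℕ) ≠ Finsupp.single 1 1 := fun h => by
    simpa using DFunLike.congr_fun h 0
  induction p using MvPolynomial.induction_on' with
  | add p q hp hq =>
    have := M2.add_mem hp hq
    convert this using 1
    simp only [coeff_add, C_add]
    ring
  | monomial d c =>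
    by_cases h0 : d = 0
    · subst h0
      simp [coeff_monomial, e01, e02, monomial_zero']
    · by_cases h1 : d = Finsupp.single 0 1
      · subst h1
        simp [coeff_monomial, e01.symm, e12, monomial_eq_two, Finsupp.single_apply]
      · by_cases h2 : d = Finsupp.single 1 1
        · subst h2
          simp [coeff_monomial, e02.symm, e12.symm, monomial_eq_two, Finsupp.single_apply]
        · simp only [coeff_monomial, if_neg h0, if_neg h1, if_neg h2, map_zero, zero_mul,
            sub_zero]
          have hd : 2 ≤ d 0 + d 1 := by
            by_contra hle
            push_neg at hle
            have hext : ∀ a b : ℕ, d 0 = a → d 1 = b →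
                d = Finsupp.single 0 a + Finsupp.single 1 b := by
              intro a b ha hb
              ext i
              fin_cases i <;> simp [ha, hb, Finsupp.single_apply]
            rcases (by omega : d 0 = 0 ∧ d 1 = 0 ∨ d 0 = 1 ∧ d 1 = 0 ∨ d 0 = 0 ∧ d 1 = 1) with
              ⟨ha, hb⟩ | ⟨ha, hb⟩ | ⟨ha, hb⟩
            · exact h0 (by simpa using hext 0 0 ha hb)
            · exact h1 (by simpa using hext 1 0 ha hb)
            · exact h2 (by simpa using hext 0 1 ha hb)
          rw [monomial_eq_two, mul_assoc]
          exact Ideal.mul_mem_left _ _ (pow_mem_M2 _ _ hd)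

private noncomputable def Jab (a b : ℂ) : Ideal RR :=
  Ideal.span {C a * X 0 + C b * X 1, X 0 ^ 2, X 0 * X 1, X 1 ^ 2}

private noncomputable def mm : Ideal RR := Ideal.span {X 0, X 1}

private lemma M2_le_Jab (a b : ℂ) : M2 ≤ Jab a b :=
  Ideal.span_mono (by intro x hx; simp only [Set.mem_insert_iff, Set.mem_singleton_iff] at *; tauto)

private lemma M2_le_mm : M2 ≤ mm := by
  rw [M2, Ideal.span_le]
  have h0 : (X 0 : RR) ∈ mm := Ideal.subset_span (by simp)
  have h1 : (X 1 : RR) ∈ mm := Ideal.subset_span (by simp)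
  rintro x (rfl | rfl | rfl)
  · exact pow_two (X 0 : RR) ▸ Ideal.mul_mem_left _ _ h0
  · exact Ideal.mul_mem_left _ _ h1
  · exact pow_two (X 1 : RR) ▸ Ideal.mul_mem_left _ _ h1

private lemma Jab_le_mm (a b : ℂ) : Jab a b ≤ mm := by
  rw [Jab, Ideal.span_le]
  have h0 : (X 0 : RR) ∈ mm := Ideal.subset_span (by simp)
  have h1 : (X 1 : RR) ∈ mm := Ideal.subset_span (by simp)
  rintro x (rfl | rfl | rfl | rfl)
  · exact mm.add_mem (Ideal.mul_mem_left _ _ h0) (Ideal.mul_mem_left _ _ h1)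
  · exact pow_two (X 0 : RR) ▸ Ideal.mul_mem_left _ _ h0
  · exact Ideal.mul_mem_left _ _ h1
  · exact pow_two (X 1 : RR) ▸ Ideal.mul_mem_left _ _ h1

private noncomputable def ev0 : RR →ₐ[ℂ] ℂ := aeval 0

private lemma mm_le_ker : mm ≤ RingHom.ker ev0 := by
  rw [mm, Ideal.span_le]
  rintro x (rfl | rfl) <;> simp [RingHom.mem_ker, ev0]

private lemma ev0_C_add_lin (c0 c1 c2 : ℂ) (q : RR) (hq : q ∈ M2) :
    ev0 (C c0 + C c1 * X 0 + C c2 * X 1 + q) = c0 := by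
  have hq0 : ev0 q = 0 := mm_le_ker (M2_le_mm hq)
  simp [ev0] at hq0 ⊢
  simp [hq0]

private lemma ker_ev0 : RingHom.ker ev0 = mm := by
  apply le_antisymm _ mm_le_ker
  intro p hp
  set c0 := coeff 0 p with hc0
  set c1 := coeff (Finsupp.single 0 1) p with hc1
  set c2 := coeff (Finsupp.single 1 1) p with hc2
  have hq := decompose p
  rw [← hc0, ← hc1, ← hc2] at hq
  have hpe : p = C c0 + C c1 * X 0 + C c2 * X 1
      + (p - C c0 - C c1 * X 0 - C c2 * X 1) := by ring
  have h0 : c0 = 0 := by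
    have h := ev0_C_add_lin c0 c1 c2 _ hq
    rw [← hpe] at h
    rw [← h]; exact hp
  have hX0 : (X 0 : RR) ∈ mm := Ideal.subset_span (by simp)
  have hX1 : (X 1 : RR) ∈ mm := Ideal.subset_span (by simp)
  have hmem : C c1 * X 0 + C c2 * X 1 + (p - C c0 - C c1 * X 0 - C c2 * X 1) ∈ mm :=
    mm.add_mem (mm.add_mem (Ideal.mul_mem_left _ _ hX0) (Ideal.mul_mem_left _ _ hX1))
      (M2_le_mm hq)
  have he : C c1 * X 0 + C c2 * X 1 + (p - C c0 - C c1 * X 0 - C c2 * X 1) = p - C c0 := by ring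
  rw [he, h0, C_0, sub_zero] at hmem
  exact hmem

private lemma mm_prime : mm.IsPrime := by
  rw [← ker_ev0]; exact RingHom.ker_isPrime _

private lemma lin_mem_Jab {a b : ℂ} (hab : (a, b) ≠ (0, 0)) (c1 c2 : ℂ)
    (h : c1 * b - c2 * a = 0) : C c1 * X 0 + C c2 * X 1 ∈ Jab a b := by
  have hgen : C a * X 0 + C b * X 1 ∈ Jab a b := Ideal.subset_span (by simp [Jab])
  have hab' : a ≠ 0 ∨ b ≠ 0 := by
    by_contra hc; push_neg at hc; exact hab (by simp [hc.1, hc.2])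
  rcases hab' with ha | hb
  · have e1 : c1 / a * a = c1 := by field_simp
    have e2 : c1 / a * b = c2 := by field_simp; linear_combination h
    have he : (C c1 * X 0 + C c2 * X 1 : MvPolynomial (Fin 2) ℂ) = C (c1 / a) * (C a * X 0 + C b * X 1) := by
      rw [mul_add, ← mul_assoc, ← C_mul, ← mul_assoc, ← C_mul, e1, e2]
    rw [he]; exact Ideal.mul_mem_left _ _ hgen
  · have e1 : c2 / b * a = c1 := by field_simp; linear_combination -h
    have e2 : c2 / b * b = c2 := by field_simp
    have he : (C c1 * X 0 + C c2 * X 1 : MvPolynomial (Fin 2) ℂ) = C (c2 / b) * (C a * X 0 + C b * X 1) := by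
      rw [mul_add, ← mul_assoc, ← C_mul, ← mul_assoc, ← C_mul, e1, e2]
    rw [he]; exact Ideal.mul_mem_left _ _ hgen

private noncomputable def phi (a b : ℂ) : RR →ₐ[ℂ] DualNumber ℂ :=
  aeval ![b • DualNumber.eps, (-a) • DualNumber.eps]

private lemma phi_X0 (a b : ℂ) : phi a b (X 0) = b • DualNumber.eps := by simp [phi]
private lemma phi_X1 (a b : ℂ) : phi a b (X 1) = (-a) • DualNumber.eps := by simp [phi]

private lemma Jab_le_ker (a b : ℂ) : Jab a b ≤ RingHom.ker (phi a b) := by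
  rw [Jab, Ideal.span_le]
  have heps : ∀ (s t : ℂ), (s • DualNumber.eps) * (t • DualNumber.eps) = (0 : DualNumber ℂ) := by
    intro s t
    rw [smul_mul_smul_comm s DualNumber.eps t DualNumber.eps, DualNumber.eps_mul_eps, smul_zero]
  rintro x (rfl | rfl | rfl | rfl) <;> simp only [SetLike.mem_coe]
  · simp only [RingHom.mem_ker, map_add, map_mul, phi_X0, phi_X1]
    rw [phi, aeval_C, aeval_C, ← Algebra.smul_def, ← Algebra.smul_def, smul_smul, smul_smul,
      ← add_smul, show a * b + b * -a = 0 by ring, zero_smul]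
  · rw [RingHom.mem_ker, map_pow, phi_X0, pow_two, heps]
  · rw [RingHom.mem_ker, map_mul, phi_X0, phi_X1, heps]
  · rw [RingHom.mem_ker, map_pow, phi_X1, pow_two, heps]

private lemma phi_C_add_lin (a b c0 c1 c2 : ℂ) :
    phi a b (C c0 + C c1 * X 0 + C c2 * X 1)
      = TrivSqZeroExt.inl c0 + (c1 * b - c2 * a) • DualNumber.eps := by
  rw [map_add, map_add, map_mul, map_mul, phi_X0, phi_X1]
  rw [phi, aeval_C, aeval_C, aeval_C, ← Algebra.smul_def, ← Algebra.smul_def,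
    smul_smul, smul_smul, add_assoc, ← add_smul, show c1 * b + c2 * -a = c1 * b - c2 * a by ring,
    TrivSqZeroExt.algebraMap_eq_inl]

private lemma ker_le_Jab {a b : ℂ} (hab : (a, b) ≠ (0, 0)) :
    RingHom.ker (phi a b) ≤ Jab a b := by
  intro p hp
  set c0 := coeff 0 p with hc0
  set c1 := coeff (Finsupp.single 0 1) p with hc1
  set c2 := coeff (Finsupp.single 1 1) p with hc2
  have hq := decompose p
  rw [← hc0, ← hc1, ← hc2] at hq
  have hpe : p = C c0 + C c1 * X 0 + C c2 * X 1
      + (p - C c0 - C c1 * X 0 - C c2 * X 1) := by ring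
  have hqk : phi a b (p - C c0 - C c1 * X 0 - C c2 * X 1) = 0 :=
    Jab_le_ker a b (M2_le_Jab a b hq)
  have hu : phi a b (C c0 + C c1 * X 0 + C c2 * X 1) = 0 := by
    have : phi a b p = 0 := hp
    rw [hpe, map_add, hqk, add_zero] at this
    exact this
  rw [phi_C_add_lin] at hu
  have h0 : c0 = 0 := by
    have := congrArg TrivSqZeroExt.fst hu
    simpa using this
  have hlin : c1 * b - c2 * a = 0 := by
    have := congrArg TrivSqZeroExt.snd hu
    simpa using this
  have hmem : C c1 * X 0 + C c2 * X 1 + (p - C c0 - C c1 * X 0 - C c2 * X 1) ∈ Jab a b :=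
    (Jab a b).add_mem (lin_mem_Jab hab c1 c2 hlin) (M2_le_Jab a b hq)
  have he : C c1 * X 0 + C c2 * X 1 + (p - C c0 - C c1 * X 0 - C c2 * X 1) = p - C c0 := by ring
  rw [he, h0, C_0, sub_zero] at hmem
  exact hmem

private lemma phi_surj {a b : ℂ} (hab : (a, b) ≠ (0, 0)) : Function.Surjective (phi a b) := by
  have hab' : a ≠ 0 ∨ b ≠ 0 := by
    by_contra hc; push_neg at hc; exact hab (by simp [hc.1, hc.2])
  have heps : ∃ w : RR, phi a b w = DualNumber.eps := by
    rcases hab' with ha | hb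
    · refine ⟨C (-a⁻¹) * X 1, ?_⟩
      rw [map_mul, phi_X1, phi, aeval_C, ← Algebra.smul_def, smul_smul,
        show -a⁻¹ * -a = 1 by field_simp, one_smul]
    · refine ⟨C b⁻¹ * X 0, ?_⟩
      rw [map_mul, phi_X0, phi, aeval_C, ← Algebra.smul_def, smul_smul,
        show b⁻¹ * b = 1 by field_simp, one_smul]
  intro z
  obtain ⟨w, hw⟩ := heps
  refine ⟨C z.fst + C z.snd * w, ?_⟩
  rw [map_add, map_mul, hw, phi, aeval_C, aeval_C, ← Algebra.smul_def,
    TrivSqZeroExt.algebraMap_eq_inl]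
  rw [DualNumber.eps, ← TrivSqZeroExt.inr_smul, smul_eq_mul, mul_one,
    TrivSqZeroExt.inl_fst_add_inr_snd_eq]

private lemma ker_phi {a b : ℂ} (hab : (a, b) ≠ (0, 0)) :
    RingHom.ker (phi a b) = Jab a b :=
  le_antisymm (ker_le_Jab hab) (Jab_le_ker a b)

private lemma finrank_Jab {a b : ℂ} (hab : (a, b) ≠ (0, 0)) :
    Module.finrank ℂ (RR ⧸ Jab a b) = 2 := by
  have e : (RR ⧸ Jab a b) ≃ₐ[ℂ] DualNumber ℂ := by
    rw [← ker_phi hab]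
    exact Ideal.quotientKerAlgEquivOfSurjective (phi_surj hab)
  rw [e.toLinearEquiv.finrank_eq]
  exact (by simp : Module.finrank ℂ (ℂ × ℂ) = 2)

private lemma radical_Jab (a b : ℂ) : (Jab a b).radical = mm := by
  apply le_antisymm
  · calc (Jab a b).radical ≤ mm.radical := Ideal.radical_mono (Jab_le_mm a b)
    _ = mm := mm_prime.radical
  · rw [mm, Ideal.span_le]
    rintro x (rfl | rfl)
    · exact Ideal.mem_radical_iff.2 ⟨2, Ideal.subset_span (by simp [Jab])⟩
    · exact Ideal.mem_radical_iff.2 ⟨2, Ideal.subset_span (by simp [Jab])⟩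

private lemma sq_zero_of_nilpotent {A : Type*} [CommRing A] [Algebra ℂ A]
    (hfr : Module.finrank ℂ A = 2) (x : A) (hx : ∃ n, x ^ n = 0) : x ^ 2 = 0 := by
  by_contra hx2
  have hnt : Nontrivial A := by
    by_contra h
    rw [not_nontrivial_iff_subsingleton] at h
    rw [Module.finrank_zero_of_subsingleton] at hfr
    norm_num at hfr
  have hfin : Module.Finite ℂ A := Module.finite_of_finrank_pos (by omega)
  classical
  set k := Nat.find hx with hkdef
  have hk : x ^ k = 0 := Nat.find_spec hx
  have hmin : ∀ m, m < k → x ^ m ≠ 0 := fun m hm => Nat.find_min hx hm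
  have hk3 : 3 ≤ k := by
    rcases Nat.lt_or_ge k 3 with h | h
    · exfalso
      interval_cases k
      · rw [pow_zero] at hk; exact one_ne_zero hk
      · exact hx2 (by rw [pow_one] at hk; rw [pow_two, hk, mul_zero])
      · exact hx2 hk
    · exact h
  have hli : LinearIndependent ℂ ![(1 : A), x, x ^ 2] := by
    rw [Fintype.linearIndependent_iff]
    intro g hg
    rw [Fin.sum_univ_three] at hg
    simp only [Matrix.cons_val_zero, Matrix.cons_val_one, Matrix.head_cons,
      Matrix.cons_val_two, Matrix.tail_cons] at hg
    have hxk1 : x ^ (k - 1) ≠ 0 := hmin _ (by omega)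
    have h0 : g 0 = 0 := by
      have h := congrArg (fun y => y * x ^ (k - 1)) hg
      simp only [add_mul, smul_mul_assoc, one_mul, zero_mul] at h
      rw [← pow_succ', ← pow_add] at h
      rw [show k - 1 + 1 = k by omega, show 2 + (k - 1) = k + 1 by omega, hk,
        pow_succ, hk, zero_mul, smul_zero, smul_zero, add_zero, add_zero] at h
      rcases smul_eq_zero.mp h with h' | h'
      · exact h'
      · exact absurd h' hxk1
    have h1 : g 1 = 0 := by
      rw [h0, zero_smul, zero_add] at hg
      have h := congrArg (fun y => y * x ^ (k - 2)) hg
      simp only [add_mul, smul_mul_assoc, zero_mul] at h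
      rw [← pow_succ', ← pow_add] at h
      rw [show k - 2 + 1 = k - 1 by omega, show 2 + (k - 2) = k by omega, hk,
        smul_zero, add_zero] at h
      rcases smul_eq_zero.mp h with h' | h'
      · exact h'
      · exact absurd h' hxk1
    have h2 : g 2 = 0 := by
      rw [h0, zero_smul, zero_add, h1, zero_smul, zero_add] at hg
      rcases smul_eq_zero.mp hg with h' | h'
      · exact h'
      · exact absurd h' hx2
    intro i
    fin_cases i
    · exact h0
    · exact h1
    · exact h2
  have hcard := hli.fintype_card_le_finrank
  rw [hfr] at hcard
  simp at hcard

private lemma forward_dir {I : Ideal RR} (h1 : Module.finrank ℂ (RR ⧸ I) = 2)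
    (h2 : I.radical = mm) : ∃ a b : ℂ, (a, b) ≠ (0, 0) ∧ I = Jab a b := by
  have hIm : I ≤ mm := h2 ▸ Ideal.le_radical
  set Q := Ideal.Quotient.mk I with hQdef
  have hsmulQ : ∀ (c : ℂ) (p : RR), Q (C c * p) = c • Q p := by
    intro c p
    rw [← smul_eq_C_mul]
    exact map_smul (Ideal.Quotient.mkₐ ℂ I) c p
  have sqmem : ∀ z : RR, z ∈ mm → z ^ 2 ∈ I := by
    intro z hz
    have hnil : ∃ n, (Q z) ^ n = 0 := by
      have hzr : z ∈ I.radical := by rw [h2]; exact hz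
      obtain ⟨n, hn⟩ := Ideal.mem_radical_iff.mp hzr
      exact ⟨n, by rw [← map_pow, Ideal.Quotient.eq_zero_iff_mem]; exact hn⟩
    have := sq_zero_of_nilpotent h1 (Q z) hnil
    rwa [← map_pow, Ideal.Quotient.eq_zero_iff_mem] at this
  have hX0m : (X 0 : RR) ∈ mm := Ideal.subset_span (by simp)
  have hX1m : (X 1 : RR) ∈ mm := Ideal.subset_span (by simp)
  have hsq0 : (X 0 : RR) ^ 2 ∈ I := sqmem _ hX0m
  have hsq1 : (X 1 : RR) ^ 2 ∈ I := sqmem _ hX1m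
  have hsqs : ((X 0 + X 1 : RR)) ^ 2 ∈ I := sqmem _ (mm.add_mem hX0m hX1m)
  have hcross : (X 0 : RR) * X 1 ∈ I := by
    have h2mem : (2 : RR) * (X 0 * X 1) ∈ I := by
      have he : ((X 0 + X 1) ^ 2 - X 0 ^ 2 - X 1 ^ 2 : RR) = 2 * (X 0 * X 1) := by ring
      rw [← he]
      exact I.sub_mem (I.sub_mem hsqs hsq0) hsq1
    have hm := I.mul_mem_left (C (2⁻¹ : ℂ)) h2mem
    have he2 : (C (2⁻¹ : ℂ) : RR) * (2 * (X 0 * X 1)) = X 0 * X 1 := by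
      rw [show (2 : RR) = C (2 : ℂ) from (map_ofNat C 2).symm, ← mul_assoc, ← C_mul]
      norm_num
    rwa [he2] at hm
  have hM2I : M2 ≤ I := by
    rw [M2, Ideal.span_le]
    rintro x (rfl | rfl | rfl) <;> simp only [SetLike.mem_coe]
    exacts [hsq0, hcross, hsq1]
  have hfin : Module.Finite ℂ (RR ⧸ I) := Module.finite_of_finrank_pos (by omega)
  have hlin : ∃ a b : ℂ, (a, b) ≠ (0, 0) ∧ C a * X 0 + C b * X 1 ∈ I := by
    by_contra hcon
    push_neg at hcon
    have hli : LinearIndependent ℂ ![(1 : RR ⧸ I), Q (X 0), Q (X 1)] := by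
      rw [Fintype.linearIndependent_iff]
      intro g hg
      rw [Fin.sum_univ_three] at hg
      simp only [Matrix.cons_val_zero, Matrix.cons_val_one, Matrix.head_cons,
        Matrix.cons_val_two, Matrix.tail_cons] at hg
      have key : Q (C (g 0) + C (g 1) * X 0 + C (g 2) * X 1) = 0 := by
        rw [map_add, map_add, hsmulQ, hsmulQ, show (C (g 0) : RR) = C (g 0) * 1 by ring,
          hsmulQ, map_one]
        exact hg
      rw [Ideal.Quotient.eq_zero_iff_mem] at key
      have h0 : g 0 = 0 := by
        have hker := mm_le_ker (hIm key)
        rw [RingHom.mem_ker] at hker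
        have he : ev0 (C (g 0) + C (g 1) * X 0 + C (g 2) * X 1) = g 0 := by simp [ev0]
        rw [he] at hker
        exact hker
      rw [h0, C_0, zero_add] at key
      have hv : C (g 1) * X 0 + C (g 2) * X 1 ∈ I := key
      have hg12 : (g 1, g 2) = ((0 : ℂ), (0 : ℂ)) := by
        by_contra hne
        exact hcon (g 1) (g 2) hne hv
      rw [Prod.mk.injEq] at hg12
      intro i
      fin_cases i
      · exact h0
      · exact hg12.1
      · exact hg12.2
    have hcard := hli.fintype_card_le_finrank
    rw [h1] at hcard
    simp at hcard
  obtain ⟨a, b, hab, hlinI⟩ := hlin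
  refine ⟨a, b, hab, ?_⟩
  apply le_antisymm
  · intro p hp
    set c0 := coeff 0 p with hc0
    set c1 := coeff (Finsupp.single 0 1) p with hc1
    set c2 := coeff (Finsupp.single 1 1) p with hc2
    have hq := decompose p
    rw [← hc0, ← hc1, ← hc2] at hq
    have huI : C c0 + C c1 * X 0 + C c2 * X 1 ∈ I := by
      have he : (C c0 + C c1 * X 0 + C c2 * X 1 : RR)
          = p - (p - C c0 - C c1 * X 0 - C c2 * X 1) := by ring
      rw [he]
      exact I.sub_mem hp (hM2I hq)
    have h0 : c0 = 0 := by
      have hker := mm_le_ker (hIm huI)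
      rw [RingHom.mem_ker] at hker
      have he : ev0 (C c0 + C c1 * X 0 + C c2 * X 1) = c0 := by simp [ev0]
      rw [he] at hker
      exact hker
    rw [h0, C_0, sub_zero] at hq
    rw [h0, C_0, zero_add] at huI
    have hvI : C c1 * X 0 + C c2 * X 1 ∈ I := huI
    by_cases hD : c1 * b - c2 * a = 0
    · have hv : C c1 * X 0 + C c2 * X 1 ∈ Jab a b := lin_mem_Jab hab c1 c2 hD
      have he : p = (C c1 * X 0 + C c2 * X 1)
          + (p - C c1 * X 0 - C c2 * X 1) := by ring
      rw [he]
      exact (Jab a b).add_mem hv (M2_le_Jab a b hq)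
    · exfalso
      set D := c1 * b - c2 * a with hDdef
      have key : ∀ α β : ℂ, (C α * (C a * X 0 + C b * X 1)
            + C β * (C c1 * X 0 + C c2 * X 1) : RR)
          = C (α * a + β * c1) * X 0 + C (α * b + β * c2) * X 1 := by
        intro α β
        rw [C_add, C_mul, C_mul, C_add, C_mul, C_mul]
        ring
      have hX0I : (X 0 : RR) ∈ I := by
        have hm := I.add_mem (I.mul_mem_left (C (-c2 / D)) hlinI)
          (I.mul_mem_left (C (b / D)) hvI)
        rw [key, show -c2 / D * a + b / D * c1 = 1 by field_simp [hDdef]; ring,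
          show -c2 / D * b + b / D * c2 = 0 by field_simp; ring,
          C_1, one_mul, C_0, zero_mul, add_zero] at hm
        exact hm
      have hX1I : (X 1 : RR) ∈ I := by
        have hm := I.add_mem (I.mul_mem_left (C (c1 / D)) hlinI)
          (I.mul_mem_left (C (-a / D)) hvI)
        rw [key, show c1 / D * a + -a / D * c1 = 0 by field_simp; ring,
          show c1 / D * b + -a / D * c2 = 1 by field_simp [hDdef]; ring,
          C_1, one_mul, C_0, zero_mul, zero_add] at hm
        exact hm
      have hmI : I = mm := by
        apply le_antisymm hIm
        rw [mm, Ideal.span_le]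
        rintro x (rfl | rfl) <;> simp only [SetLike.mem_coe]
        exacts [hX0I, hX1I]
      have hev0surj : Function.Surjective ev0 := fun c => ⟨C c, by simp [ev0]⟩
      have e : (RR ⧸ mm) ≃ₐ[ℂ] ℂ := by
        rw [← ker_ev0]
        exact Ideal.quotientKerAlgEquivOfSurjective hev0surj
      have hone : Module.finrank ℂ (RR ⧸ mm) = 1 := by
        rw [e.toLinearEquiv.finrank_eq]
        simp
      rw [hmI, hone] at h1
      norm_num at h1
  · rw [Jab, Ideal.span_le]
    rintro x (rfl | rfl | rfl | rfl) <;> simp only [SetLike.mem_coe]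
    exacts [hlinI, hsq0, hcross, hsq1]

theorem stmt14 (I : Ideal (MvPolynomial (Fin 2) ℂ)) :
    (Module.finrank ℂ (MvPolynomial (Fin 2) ℂ ⧸ I) = 2 ∧
        I.radical = Ideal.span {X 0, X 1}) ↔
      ∃ a b : ℂ, (a, b) ≠ (0, 0) ∧
        I = Ideal.span {C a * X 0 + C b * X 1, X 0 ^ 2, X 0 * X 1, X 1 ^ 2} := by
  have hmmdef : mm = Ideal.span {X 0, X 1} := rfl
  constructor
  · rintro ⟨h1, h2⟩
    obtain ⟨a, b, hab, hI⟩ := forward_dir h1 (h2.trans hmmdef.symm)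
    exact ⟨a, b, hab, hI⟩
  · rintro ⟨a, b, hab, rfl⟩
    exact ⟨finrank_Jab hab, (radical_Jab a b).trans hmmdef⟩
end
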